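/- arXiv:2502.17245 — 4 statements merged into one kernel-verified Lean document; each statement's English description precedes it below -/
import Mathlib

section
/- Let u : ℝ^d → N be Borel measurable. If the double integral ∬_{ℝ^d × ℝ^d} dist_N(u(x), u(y)) dx dy is finite, then u is constant almost everywhere, i.e. there exists b ∈ N such that u(x) = b for almost every x ∈ ℝ^d. -/
open MeasureTheory ENNReal

/-!
Write `F x = ∫ dist (u x, u y) dy`. By Tonelli `F` is finite almost everywhere; fix `x₀`
with `F x₀ < ∞`. By Markov's inequality `u` stays within `c / 2` of `u x₀` outside a set of
finite measure, hence on a set of infinite measure, and on that set `dist (u y, u z) ≥ c / 2`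
whenever `dist (u x₀, u y) = c > 0`. So `F y = ∞` for every `y` with `u y ≠ u x₀`, and these
`y` form a null set.
-/

theorem ae_lintegral_prodMk_ne_top {α β : Type*} [MeasurableSpace α] [MeasurableSpace β]
    {μ : Measure α} {ν : Measure β} [SFinite ν] {f : α × β → ℝ≥0∞} (hf : Measurable f)
    (h : ∫⁻ p, f p ∂(μ.prod ν) ≠ ∞) : ∀ᵐ x ∂μ, ∫⁻ y, f (x, y) ∂ν ≠ ∞ := by
  rw [lintegral_prod f hf.aemeasurable] at h
  filter_upwards [ae_lt_top hf.lintegral_prod_right' h] with x hx using hx.ne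

theorem lintegral_edist_eq_top_of_edist_ne_zero {α N : Type*} [MeasurableSpace α]
    {μ : Measure α} [PseudoEMetricSpace N] [MeasurableSpace N] [OpensMeasurableSpace N]
    {g : α → N} (hg : AEMeasurable g μ) (hμ : μ Set.univ = ∞) {a b : N}
    (ha : ∫⁻ z, edist a (g z) ∂μ ≠ ∞) (hab : edist a b ≠ 0) :
    ∫⁻ z, edist b (g z) ∂μ = ∞ := by
  set c := edist a b
  have hc : c / 2 ≠ 0 := by simpa using hab
  set G := {z | edist a (g z) < c / 2}
  have hGc : μ Gᶜ < ∞ := by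
    have hGc_eq : Gᶜ = {z | c / 2 ≤ edist a (g z)} := by ext; simp [G]
    rw [hGc_eq]
    refine lt_top_of_mul_ne_top_right (ne_top_of_le_ne_top ha ?_) hc
    exact mul_meas_ge_le_lintegral₀ (measurable_edist_right.comp_aemeasurable hg) _
  have hG : μ G = ∞ := by
    by_contra hG
    have := (measure_univ_le_add_compl G).trans_lt (add_lt_top.2 ⟨lt_top_iff_ne_top.2 hG, hGc⟩)
    exact this.ne hμ
  have hG_sub : G ⊆ {z | c / 2 ≤ edist b (g z)} := by
    intro z hz
    by_contra hbz
    rw [Set.mem_ofPred_eq, not_le] at hbz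
    have : c < c := calc
      c ≤ edist a (g z) + edist (g z) b := edist_triangle _ _ _
      _ < c / 2 + c / 2 := ENNReal.add_lt_add hz (by rwa [edist_comm])
      _ = c := ENNReal.add_halves c
    exact this.false
  refine top_unique ?_
  calc ∞ = c / 2 * μ G := by rw [hG, mul_top hc]
    _ ≤ c / 2 * μ {z | c / 2 ≤ edist b (g z)} := by gcongr
    _ ≤ ∫⁻ z, edist b (g z) ∂μ :=
      mul_meas_ge_le_lintegral₀ (measurable_edist_right.comp_aemeasurable hg) _

theorem exists_ae_eq_const_of_lintegral_edist_ne_top {α N : Type*} [MeasurableSpace α]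
    {μ : Measure α} [SFinite μ] [EMetricSpace N] [SecondCountableTopology N]
    [MeasurableSpace N] [OpensMeasurableSpace N] {u : α → N} (hu : Measurable u)
    (hμ : μ Set.univ = ∞) (h : ∫⁻ p, edist (u p.1) (u p.2) ∂(μ.prod μ) ≠ ∞) :
    ∃ b, ∀ᵐ x ∂μ, u x = b := by
  have hfin : ∀ᵐ x ∂μ, ∫⁻ y, edist (u x) (u y) ∂μ ≠ ∞ :=
    ae_lintegral_prodMk_ne_top ((hu.comp measurable_fst).edist (hu.comp measurable_snd)) h
  have : (ae μ).NeBot := ae_neBot.2 (by rintro rfl; simp at hμ)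
  obtain ⟨x₀, hx₀⟩ := hfin.exists
  refine ⟨u x₀, ?_⟩
  filter_upwards [hfin] with y hy
  by_contra hne
  exact hy (lintegral_edist_eq_top_of_edist_ne_zero hu.aemeasurable hμ hx₀
    (edist_pos.2 (Ne.symm hne)).ne')

theorem stmt_1_general (d : ℕ) (hd : 1 ≤ d)
    {N : Type*} [MetricSpace N] [TopologicalSpace.SeparableSpace N]
    [MeasurableSpace N] [BorelSpace N]
    (u : EuclideanSpace ℝ (Fin d) → N) (hu : Measurable u)
    (h : ∫⁻ p : EuclideanSpace ℝ (Fin d) × EuclideanSpace ℝ (Fin d),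
        edist (u p.1) (u p.2) < ⊤) :
    ∃ b : N, ∀ᵐ x : EuclideanSpace ℝ (Fin d), u x = b := by
  have : Nontrivial (EuclideanSpace ℝ (Fin d)) :=
    have : Nonempty (Fin d) := ⟨⟨0, hd⟩⟩
    inferInstance
  exact exists_ae_eq_const_of_lintegral_edist_ne_top hu
    (measure_univ_of_isAddLeftInvariant volume) h.ne

/-- If the double integral of `dist (u x) (u y)` over `ℝ^d × ℝ^d` is finite, then `u`
is constant almost everywhere. -/
theorem stmt_1 (d : ℕ) (hd : 1 ≤ d)
    {N : Type*} [MetricSpace N] [CompleteSpace N] [TopologicalSpace.SeparableSpace N]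
    [MeasurableSpace N] [BorelSpace N]
    (u : EuclideanSpace ℝ (Fin d) → N) (hu : Measurable u)
    (h : ∫⁻ p : EuclideanSpace ℝ (Fin d) × EuclideanSpace ℝ (Fin d),
        edist (u p.1) (u p.2) < ⊤) :
    ∃ b : N, ∀ᵐ x : EuclideanSpace ℝ (Fin d), u x = b :=
  stmt_1_general d hd u hu h
end

section
/- (Bourgain–Brezis–Mironescu–Maz'ya–Shaposhnikova-type formula.) Let u : ℝ^d → N be Borel measurable. Then there exists b_* ∈ N such that ∫_{ℝ^d} dist_N(u(x), b_*) dx = (1/2) · lim_{R → ∞} (1/|B^d_R|) ∬_{{(x,y) ∈ ℝ^d × ℝ^d : |x − y| ≤ R}} dist_N(u(x), u(y)) dx dy, where the limit exists in [0, ∞] and both sides may simultaneously equal +∞. -/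
/-!
Write `a_b x = d(u x, b)` and `E R` for the double integral over `|x - y| ≤ R`. The triangle
inequality gives `E R ≤ 2 |B_R| ∫ a_b`. Conversely
`a_b x + a_b y ≤ d(u x, u y) + 2 min (a_b x) (a_b y)`, and splitting the minimum at a small
level `t` (the set `{t ≤ a_b}` has finite measure by Markov) gives
`2 |B_R| ∫ a_b ≤ E R + o(|B_R|)` whenever `∫ a_b < ∞`.

If instead `∫ a_b = ∞` for every `b` while `E R ≤ M |B_R|` along some `R → ∞`, averaging over
`B_{R/2} × B_{R/2}` produces points `z_R` with `∫_{B_{R/2}} d(u x, u z_R) ≤ 2^d M`. Comparing two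
of them on a common ball shows that the `u z_R` form a Cauchy sequence, and by Fatou its limit
`b` has `∫ a_b ≤ 2^d M`, a contradiction.
-/

open MeasureTheory Filter Metric Set ENNReal Topology Module

section Slicing

variable {X : Type*} [PseudoMetricSpace X] [MeasurableSpace X] [OpensMeasurableSpace X]
  [SecondCountableTopology X] {μ : Measure X} [SFinite μ]

lemma measurableSet_dist_le (R : ℝ) : MeasurableSet {p : X × X | dist p.1 p.2 ≤ R} :=
  measurableSet_le (measurable_fst.dist measurable_snd) measurable_const

lemma lintegral_dist_le_eq_lintegral_closedBall {F : X × X → ℝ≥0∞} (hF : Measurable F) (R : ℝ) :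
    ∫⁻ p in {p : X × X | dist p.1 p.2 ≤ R}, F p ∂μ.prod μ
      = ∫⁻ x, ∫⁻ y in closedBall x R, F (x, y) ∂μ ∂μ := by
  rw [← lintegral_indicator (measurableSet_dist_le R),
    lintegral_prod _ (hF.indicator (measurableSet_dist_le R)).aemeasurable]
  refine lintegral_congr fun x => ?_
  rw [← lintegral_indicator measurableSet_closedBall]
  congr 1 with y
  simp only [indicator, mem_ofPred_eq, mem_closedBall, dist_comm y]

lemma lintegral_dist_le_eq_lintegral_closedBall' {F : X × X → ℝ≥0∞} (hF : Measurable F) (R : ℝ) :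
    ∫⁻ p in {p : X × X | dist p.1 p.2 ≤ R}, F p ∂μ.prod μ
      = ∫⁻ y, ∫⁻ x in closedBall y R, F (x, y) ∂μ ∂μ := by
  rw [← lintegral_indicator (measurableSet_dist_le R),
    lintegral_prod_symm _ (hF.indicator (measurableSet_dist_le R)).aemeasurable]
  refine lintegral_congr fun y => ?_
  rw [← lintegral_indicator measurableSet_closedBall]
  congr 1 with x

end Slicing

lemma edist_add_edist_le_edist_add_two_mul_min {N : Type*} [PseudoEMetricSpace N] (x y b : N) :
    edist x b + edist y b ≤ edist x y + 2 * min (edist x b) (edist y b) := by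
  rcases le_total (edist x b) (edist y b) with h | h
  · calc edist x b + edist y b ≤ edist x b + (edist x y + edist x b) := by
          gcongr; exact edist_triangle_left _ _ _
      _ = edist x y + 2 * min (edist x b) (edist y b) := by rw [min_eq_left h]; ring
  · calc edist x b + edist y b ≤ (edist x y + edist y b) + edist y b := by
          gcongr; exact edist_triangle _ _ _
      _ = edist x y + 2 * min (edist x b) (edist y b) := by rw [min_eq_right h]; ring

lemma min_le_min_add_mul_indicator (a c t : ℝ≥0∞) :
    min a c ≤ min c t + a * (Ici t).indicator 1 c := by
  by_cases hc : t ≤ c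
  · rw [indicator_of_mem (mem_Ici.2 hc), Pi.one_apply, mul_one]
    exact (min_le_left _ _).trans le_add_self
  · rw [indicator_of_notMem (by simpa using hc), mul_zero, add_zero, min_eq_left (not_le.1 hc).le]
    exact min_le_right _ _

lemma tendsto_lintegral_min_nhds_zero {α : Type*} [MeasurableSpace α] {ν : Measure α}
    {a : α → ℝ≥0∞} (ha : AEMeasurable a ν) (hA : ∫⁻ x, a x ∂ν ≠ ∞) :
    Tendsto (fun t => ∫⁻ x, min (a x) t ∂ν) (𝓝 0) (𝓝 0) := by
  simpa using tendsto_lintegral_filter_of_dominated_convergence' (f := fun _ => 0) a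
    (.of_forall fun t => ha.min aemeasurable_const)
    (.of_forall fun t => .of_forall fun x => min_le_left _ _) hA
    (.of_forall fun x => by
      simpa using (tendsto_const_nhds (x := a x)).min (tendsto_id (x := 𝓝 (0 : ℝ≥0∞))))

lemma edist_mul_measure_le_setLIntegral_add {α N : Type*} [MeasurableSpace α] {ν : Measure α}
    [PseudoEMetricSpace N] [MeasurableSpace N] [OpensMeasurableSpace N] {u : α → N}
    (hu : Measurable u) (s : Set α) (p q : N) :
    edist p q * ν s ≤ ∫⁻ x in s, edist (u x) p ∂ν + ∫⁻ x in s, edist (u x) q ∂ν := by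
  rw [← lintegral_add_left (f := fun x => edist (u x) p) (measurable_edist_left.comp hu),
    ← setLIntegral_const]
  exact lintegral_mono fun x => edist_triangle_left _ _ _

noncomputable def nonlocalEnergy {E N : Type*} [PseudoMetricSpace E] [MeasurableSpace E]
    [PseudoEMetricSpace N] (μ : Measure E) (u : E → N) (R : ℝ) : ℝ≥0∞ :=
  ∫⁻ p in {p : E × E | dist p.1 p.2 ≤ R}, edist (u p.1) (u p.2) ∂μ.prod μ

section HaarSpace

variable {E : Type*} [NormedAddCommGroup E] [NormedSpace ℝ E] [FiniteDimensional ℝ E]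
  [MeasurableSpace E] [BorelSpace E] {μ : Measure E} [μ.IsAddHaarMeasure]
  {N : Type*} [PseudoEMetricSpace N] [MeasurableSpace N] [OpensMeasurableSpace N] {u : E → N}

lemma lintegral_dist_le_comp_fst {a : E → ℝ≥0∞} (ha : Measurable a) (R : ℝ) :
    ∫⁻ p in {p : E × E | dist p.1 p.2 ≤ R}, a p.1 ∂μ.prod μ
      = (∫⁻ x, a x ∂μ) * μ (closedBall 0 R) := by
  simp_rw [lintegral_dist_le_eq_lintegral_closedBall (F := fun p => a p.1)
    (ha.comp measurable_fst), setLIntegral_const, Measure.addHaar_closedBall_center,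
    lintegral_mul_const _ ha]

lemma lintegral_dist_le_comp_snd {a : E → ℝ≥0∞} (ha : Measurable a) (R : ℝ) :
    ∫⁻ p in {p : E × E | dist p.1 p.2 ≤ R}, a p.2 ∂μ.prod μ
      = (∫⁻ x, a x ∂μ) * μ (closedBall 0 R) := by
  simp_rw [lintegral_dist_le_eq_lintegral_closedBall' (F := fun p => a p.2)
    (ha.comp measurable_snd), setLIntegral_const, Measure.addHaar_closedBall_center,
    lintegral_mul_const _ ha]

lemma lintegral_dist_le_mul_indicator_le {a : E → ℝ≥0∞} (ha : Measurable a) {T : Set E}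
    (hT : MeasurableSet T) (R : ℝ) :
    ∫⁻ p in {p : E × E | dist p.1 p.2 ≤ R}, a p.1 * T.indicator 1 p.2 ∂μ.prod μ
      ≤ (∫⁻ x, a x ∂μ) * μ T := by
  have hind : Measurable (T.indicator (1 : E → ℝ≥0∞)) := measurable_one.indicator hT
  rw [lintegral_dist_le_eq_lintegral_closedBall' (F := fun p => a p.1 * T.indicator 1 p.2)
    ((ha.comp measurable_fst).mul (hind.comp measurable_snd)),
    ← lintegral_indicator_one hT, ← lintegral_const_mul _ hind]
  refine lintegral_mono fun y => ?_
  rw [lintegral_mul_const (T.indicator 1 y) ha]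
  exact mul_le_mul_left (setLIntegral_le_lintegral _ _) _

lemma tendsto_measure_closedBall_atTop [Nontrivial E] :
    Tendsto (fun R : ℝ => μ (closedBall 0 R)) atTop (𝓝 ∞) := by
  have hpow : Tendsto (fun R : ℝ => ENNReal.ofReal (R ^ finrank ℝ E)) atTop (𝓝 ∞) :=
    ENNReal.tendsto_ofReal_atTop.comp (tendsto_pow_atTop finrank_pos.ne')
  have h := ENNReal.Tendsto.mul_const hpow
    (.inr (measure_ball_lt_top (μ := μ) (x := 0) (r := 1)).ne)
  rw [top_mul (measure_ball_pos μ (0 : E) one_pos).ne'] at h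
  refine h.congr' ?_
  filter_upwards [eventually_ge_atTop 0] with R hR
  rw [Measure.addHaar_closedBall μ 0 hR]

lemma tendsto_div_measure_closedBall_atTop [Nontrivial E] {c : ℝ≥0∞} (hc : c ≠ ∞) :
    Tendsto (fun R : ℝ => c / μ (closedBall 0 R)) atTop (𝓝 0) := by
  simpa only [div_eq_mul_inv, inv_top, mul_zero] using
    ENNReal.Tendsto.const_mul (tendsto_measure_closedBall_atTop (μ := μ)).inv (Or.inr hc)

lemma nonlocalEnergy_le [SecondCountableTopology N] (hu : Measurable u) (b : N) (R : ℝ) :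
    nonlocalEnergy μ u R ≤ 2 * (∫⁻ x, edist (u x) b ∂μ) * μ (closedBall 0 R) := by
  have ha : Measurable fun x => edist (u x) b := hu.edist measurable_const
  have ha₁ : Measurable fun p : E × E => edist (u p.1) b := ha.comp measurable_fst
  calc nonlocalEnergy μ u R
      ≤ ∫⁻ p in {p : E × E | dist p.1 p.2 ≤ R}, edist (u p.1) b + edist (u p.2) b ∂μ.prod μ :=
        lintegral_mono fun p => edist_triangle_right _ _ _
    _ = 2 * (∫⁻ x, edist (u x) b ∂μ) * μ (closedBall 0 R) := by
        rw [lintegral_add_left ha₁, lintegral_dist_le_comp_fst ha,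
          lintegral_dist_le_comp_snd ha]
        ring

lemma two_mul_lintegral_edist_mul_le [SecondCountableTopology N] (hu : Measurable u) (b : N)
    (t : ℝ≥0∞) (R : ℝ) :
    2 * (∫⁻ x, edist (u x) b ∂μ) * μ (closedBall 0 R)
      ≤ nonlocalEnergy μ u R + 2 * (∫⁻ x, min (edist (u x) b) t ∂μ) * μ (closedBall 0 R)
        + 2 * ((∫⁻ x, edist (u x) b ∂μ) * μ {x | t ≤ edist (u x) b}) := by
  set a : E → ℝ≥0∞ := fun x => edist (u x) b
  set T : Set E := a ⁻¹' Ici t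
  have ha : Measurable a := hu.edist measurable_const
  have hT : MeasurableSet T := ha measurableSet_Ici
  have ha₁ : Measurable fun p : E × E => a p.1 := ha.comp measurable_fst
  have hmin : Measurable fun x => min (a x) t := ha.min measurable_const
  have hmin₂ : Measurable fun p : E × E => min (a p.2) t := hmin.comp measurable_snd
  have hind : Measurable fun p : E × E => a p.1 * T.indicator 1 p.2 :=
    ha₁.mul ((measurable_one.indicator hT).comp measurable_snd)
  calc 2 * (∫⁻ x, a x ∂μ) * μ (closedBall 0 R)
      = ∫⁻ p in {p : E × E | dist p.1 p.2 ≤ R}, a p.1 + a p.2 ∂μ.prod μ := by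
        rw [lintegral_add_left ha₁, lintegral_dist_le_comp_fst ha,
          lintegral_dist_le_comp_snd ha]
        ring
    _ ≤ ∫⁻ p in {p : E × E | dist p.1 p.2 ≤ R},
          edist (u p.1) (u p.2) + 2 * min (a p.2) t + 2 * (a p.1 * T.indicator 1 p.2) ∂μ.prod μ :=
        lintegral_mono fun p => calc
          a p.1 + a p.2 ≤ edist (u p.1) (u p.2) + 2 * min (a p.1) (a p.2) :=
            edist_add_edist_le_edist_add_two_mul_min _ _ _
          _ ≤ edist (u p.1) (u p.2) + 2 * (min (a p.2) t + a p.1 * T.indicator 1 p.2) := by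
            gcongr; exact min_le_min_add_mul_indicator _ _ _
          _ = _ := by ring
    _ = nonlocalEnergy μ u R + 2 * (∫⁻ x, min (a x) t ∂μ) * μ (closedBall 0 R)
          + 2 * ∫⁻ p in {p : E × E | dist p.1 p.2 ≤ R}, a p.1 * T.indicator 1 p.2 ∂μ.prod μ := by
        rw [lintegral_add_right _ (hind.const_mul 2),
          lintegral_add_right _ (hmin₂.const_mul 2), lintegral_const_mul _ hmin₂,
          lintegral_dist_le_comp_snd hmin,          lintegral_const_mul _ hind, mul_assoc]
        rfl
    _ ≤ _ := by gcongr; exact lintegral_dist_le_mul_indicator_le ha hT R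

lemma two_mul_lintegral_edist_le_liminf_add [Nontrivial E] [SecondCountableTopology N]
    (hu : Measurable u) {b : N} (hA : ∫⁻ x, edist (u x) b ∂μ ≠ ∞) {t : ℝ≥0∞} (ht : t ≠ 0)
    (ht' : t ≠ ∞) :
    2 * ∫⁻ x, edist (u x) b ∂μ
      ≤ liminf (fun R => nonlocalEnergy μ u R / μ (closedBall 0 R)) atTop
        + 2 * ∫⁻ x, min (edist (u x) b) t ∂μ := by
  set A := ∫⁻ x, edist (u x) b ∂μ
  set m := ∫⁻ x, min (edist (u x) b) t ∂μ
  set c := 2 * (A * μ {x | t ≤ edist (u x) b})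
  have hc : c ≠ ∞ := mul_ne_top ofNat_ne_top <| mul_ne_top hA <| ne_top_of_le_ne_top
    (div_ne_top hA ht) (meas_ge_le_lintegral_div (hu.edist measurable_const).aemeasurable ht ht')
  have hR : ∀ᶠ R in atTop,
      2 * A ≤ nonlocalEnergy μ u R / μ (closedBall 0 R) + 2 * m + c / μ (closedBall 0 R) := by
    filter_upwards [eventually_gt_atTop 0] with R hR
    have hv₀ : μ (closedBall 0 R) ≠ 0 := (measure_closedBall_pos μ 0 hR).ne'
    have hv : μ (closedBall 0 R) ≠ ∞ := measure_closedBall_lt_top.ne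
    rw [← ENNReal.mul_div_cancel_right (a := 2 * m) hv₀ hv, ← ENNReal.add_div, ← ENNReal.add_div,
      ENNReal.le_div_iff_mul_le (.inl hv₀) (.inl hv)]
    exact two_mul_lintegral_edist_mul_le hu b t R
  calc 2 * A
      ≤ liminf (fun R => nonlocalEnergy μ u R / μ (closedBall 0 R) + 2 * m
          + c / μ (closedBall 0 R)) atTop := le_liminf_of_le (by isBoundedDefault) hR
    _ = liminf (fun R => nonlocalEnergy μ u R / μ (closedBall 0 R) + 2 * m) atTop :=
        liminf_add_of_right_tendsto_zero (tendsto_div_measure_closedBall_atTop hc) _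
    _ = liminf (fun R => nonlocalEnergy μ u R / μ (closedBall 0 R)) atTop + 2 * m :=
        liminf_add_const _ _ _ (by isBoundedDefault) (by isBoundedDefault)

lemma tendsto_nonlocalEnergy_div_of_lintegral_ne_top [Nontrivial E] [SecondCountableTopology N]
    (hu : Measurable u) {b : N} (hA : ∫⁻ x, edist (u x) b ∂μ ≠ ∞) :
    Tendsto (fun R => nonlocalEnergy μ u R / μ (closedBall 0 R)) atTop
      (𝓝 (2 * ∫⁻ x, edist (u x) b ∂μ)) := by
  set r := fun R => nonlocalEnergy μ u R / μ (closedBall 0 R)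
  have : (𝓝[>] (0 : ℝ≥0∞)).NeBot := nhdsGT_neBot_of_exists_gt ⟨1, zero_lt_one⟩
  have hlim : Tendsto (fun t => liminf r atTop + 2 * ∫⁻ x, min (edist (u x) b) t ∂μ)
      (𝓝[>] 0) (𝓝 (liminf r atTop)) := by
    simpa using (tendsto_const_nhds.add <| ENNReal.Tendsto.const_mul (a := 2)
      (tendsto_lintegral_min_nhds_zero (hu.edist measurable_const).aemeasurable hA)
      (.inr ofNat_ne_top)).mono_left nhdsWithin_le_nhds
  have hliminf : 2 * ∫⁻ x, edist (u x) b ∂μ ≤ liminf r atTop := by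
    refine ge_of_tendsto hlim ?_
    filter_upwards [self_mem_nhdsWithin, nhdsWithin_le_nhds (gt_mem_nhds zero_lt_one)]
      with t ht ht'
    exact two_mul_lintegral_edist_le_liminf_add hu hA (ne_of_gt ht) (ht'.trans one_lt_top).ne
  exact tendsto_of_le_liminf_of_limsup_le hliminf <| limsup_le_of_le (by isBoundedDefault)
    (.of_forall fun R => ENNReal.div_le_of_le_mul (nonlocalEnergy_le hu b R))

lemma exists_setLIntegral_edist_le_of_nonlocalEnergy_le [SecondCountableTopology N]
    (hu : Measurable u) {R : ℝ} (hR : 0 < R)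
    {M : ℝ≥0∞} (hM : nonlocalEnergy μ u R ≤ M * μ (closedBall 0 R)) :
    ∃ z, ∫⁻ x in closedBall 0 (R / 2), edist (u x) (u z) ∂μ
      ≤ ENNReal.ofReal (2 ^ finrank ℝ E) * M := by
  set Q : Set E := closedBall 0 (R / 2)
  have hF : Measurable fun p : E × E => edist (u p.1) (u p.2) :=
    (hu.comp measurable_fst).edist (hu.comp measurable_snd)
  have hQ₀ : μ Q ≠ 0 := (measure_closedBall_pos μ 0 (half_pos hR)).ne'
  have hQ : μ Q ≠ ∞ := measure_closedBall_lt_top.ne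
  have hQQ : Q ×ˢ Q ⊆ {p : E × E | dist p.1 p.2 ≤ R} := fun p ⟨hx, hy⟩ => calc
    dist p.1 p.2 ≤ dist p.1 0 + dist p.2 0 := dist_triangle_right _ _ _
    _ ≤ R / 2 + R / 2 := add_le_add (mem_closedBall.1 hx) (mem_closedBall.1 hy)
    _ = R := add_halves R
  have hdouble : μ (closedBall 0 R) = ENNReal.ofReal (2 ^ finrank ℝ E) * μ Q := by
    rw [← Measure.addHaar_closedBall_mul μ 0 zero_le_two (half_pos hR).le,
      mul_div_cancel₀ _ two_ne_zero]
  obtain ⟨z, -, hz⟩ := exists_le_setLAverage hQ₀ hQ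
    (hF.lintegral_prod_left' (μ := μ.restrict Q)).aemeasurable
  refine ⟨z, hz.trans ?_⟩
  rw [setLAverage_eq, ENNReal.div_le_iff hQ₀ hQ]
  calc ∫⁻ y in Q, ∫⁻ x in Q, edist (u x) (u y) ∂μ ∂μ
      = ∫⁻ p in Q ×ˢ Q, edist (u p.1) (u p.2) ∂μ.prod μ := by
        rw [← Measure.prod_restrict, lintegral_prod_symm _ hF.aemeasurable]
    _ ≤ nonlocalEnergy μ u R := lintegral_mono_set hQQ
    _ ≤ ENNReal.ofReal (2 ^ finrank ℝ E) * M * μ Q := by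
        rw [mul_right_comm, ← hdouble, mul_comm]; exact hM

lemma exists_lintegral_edist_le_of_setLIntegral_le [Nontrivial E] [CompleteSpace N]
    (hu : Measurable u) {ρ : ℕ → ℝ} (hρ : Tendsto ρ atTop atTop) (z : ℕ → N) {C : ℝ≥0∞}
    (hC : C ≠ ∞) (h : ∀ n, ∫⁻ x in closedBall 0 (ρ n), edist (u x) (z n) ∂μ ≤ C) :
    ∃ b, ∫⁻ x, edist (u x) b ∂μ ≤ C := by
  have hz : CauchySeq z := by
    refine EMetric.cauchySeq_iff'.2 fun ε hε => ?_
    obtain ⟨r, hr₀, hr⟩ := ((eventually_gt_atTop 0).and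
      ((tendsto_div_measure_closedBall_atTop (μ := μ) (c := 2 * C)
        (mul_ne_top ofNat_ne_top hC)).eventually (gt_mem_nhds hε))).exists
    obtain ⟨K, hK⟩ := (hρ.eventually_ge_atTop r).exists_forall_of_atTop
    have hball (n : ℕ) (hn : K ≤ n) :
        ∫⁻ x in closedBall 0 r, edist (u x) (z n) ∂μ ≤ C :=
      (lintegral_mono_set (closedBall_subset_closedBall (hK n hn))).trans (h n)
    refine ⟨K, fun n hn => lt_of_le_of_lt ?_ hr⟩
    rw [ENNReal.le_div_iff_mul_le (.inl (measure_closedBall_pos μ 0 hr₀).ne')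
      (.inl measure_closedBall_lt_top.ne), two_mul]
    exact (edist_mul_measure_le_setLIntegral_add hu _ _ _).trans
      (add_le_add (hball n hn) (hball K le_rfl))
  obtain ⟨b, hb⟩ := cauchySeq_tendsto_of_complete hz
  refine ⟨b, ?_⟩
  have hlim (x : E) : Tendsto (fun n => (closedBall 0 (ρ n)).indicator
      (fun y => edist (u y) (z n)) x) atTop (𝓝 (edist (u x) b)) := by
    refine (tendsto_const_nhds.edist hb).congr' ?_
    filter_upwards [hρ.eventually_ge_atTop ‖x‖] with n hn
    rw [indicator_of_mem (mem_closedBall_zero_iff.2 hn)]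
  calc ∫⁻ x, edist (u x) b ∂μ
      = ∫⁻ x, liminf (fun n => (closedBall 0 (ρ n)).indicator
          (fun y => edist (u y) (z n)) x) atTop ∂μ :=
        lintegral_congr fun x => (hlim x).liminf_eq.symm
    _ ≤ liminf (fun n => ∫⁻ x, (closedBall 0 (ρ n)).indicator
          (fun y => edist (u y) (z n)) x ∂μ) atTop :=
        lintegral_liminf_le fun n =>
          (measurable_edist_left.comp hu).indicator measurableSet_closedBall
    _ ≤ C := liminf_le_of_frequently_le' <| .of_forall fun n => by
        rw [lintegral_indicator measurableSet_closedBall]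
        exact h n

lemma exists_lintegral_edist_ne_top_of_frequently_le [Nontrivial E] [CompleteSpace N]
    [SecondCountableTopology N] (hu : Measurable u) {M : ℝ≥0∞} (hM : M ≠ ∞)
    (h : ∃ᶠ R in atTop, nonlocalEnergy μ u R / μ (closedBall 0 R) ≤ M) :
    ∃ b, ∫⁻ x, edist (u x) b ∂μ ≠ ∞ := by
  choose R hR hRM using fun n : ℕ => frequently_atTop.1 h (max n 1)
  have hR₀ (n : ℕ) : 0 < R n := zero_lt_one.trans_le ((le_max_right _ _).trans (hR n))
  choose z hz using fun n => exists_setLIntegral_edist_le_of_nonlocalEnergy_le hu (hR₀ n)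
    ((ENNReal.div_le_iff (measure_closedBall_pos μ 0 (hR₀ n)).ne'
      measure_closedBall_lt_top.ne).1 (hRM n))
  have hρ : Tendsto (fun n => R n / 2) atTop atTop :=
    (tendsto_atTop_mono (fun n => (le_max_left _ _).trans (hR n)) tendsto_natCast_atTop_atTop)
      |>.atTop_div_const two_pos
  obtain ⟨b, hb⟩ := exists_lintegral_edist_le_of_setLIntegral_le hu hρ (fun n => u (z n))
    (mul_ne_top ofReal_ne_top hM) hz
  exact ⟨b, ne_top_of_le_ne_top (mul_ne_top ofReal_ne_top hM) hb⟩

lemma tendsto_nonlocalEnergy_div_top [Nontrivial E] [CompleteSpace N] [SecondCountableTopology N]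
    (hu : Measurable u) (h : ∀ b, ∫⁻ x, edist (u x) b ∂μ = ∞) :
    Tendsto (fun R => nonlocalEnergy μ u R / μ (closedBall 0 R)) atTop (𝓝 ∞) := by
  refine ENNReal.tendsto_nhds_top_iff_nat.2 fun n => ?_
  by_contra hn
  obtain ⟨b, hb⟩ := exists_lintegral_edist_ne_top_of_frequently_le hu (natCast_ne_top n)
    ((not_eventually.1 hn).mono fun R hR => not_lt.1 hR)
  exact hb (h b)

end HaarSpace

/-- Bourgain–Brezis–Mironescu–Maz'ya–Shaposhnikova-type formula: there is `b_* ∈ N` such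
that `∫ dist (u x) b_*` equals half the limit as `R → ∞` of
`(1/|B^d_R|) ∬_{|x-y| ≤ R} dist (u x) (u y)`, the limit existing in `[0,∞]`. -/
theorem stmt_3 (d : ℕ) (hd : 1 ≤ d)
    {N : Type*} [MetricSpace N] [CompleteSpace N] [TopologicalSpace.SeparableSpace N]
    [MeasurableSpace N] [BorelSpace N]
    (u : EuclideanSpace ℝ (Fin d) → N) (hu : Measurable u) :
    ∃ b : N, Tendsto
      (fun R : ℝ =>
        (∫⁻ p in {p : EuclideanSpace ℝ (Fin d) × EuclideanSpace ℝ (Fin d) |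
            dist p.1 p.2 ≤ R}, edist (u p.1) (u p.2))
          / volume (Metric.ball (0 : EuclideanSpace ℝ (Fin d)) R))
      atTop (nhds (2 * ∫⁻ x, edist (u x) b)) := by
  have : NeZero d := ⟨by omega⟩
  have := UniformSpace.secondCountable_of_separable N
  simp_rw [← Measure.addHaar_closedBall_eq_addHaar_ball, Measure.volume_eq_prod]
  by_cases hfin : ∃ b, ∫⁻ x, edist (u x) b ≠ ∞
  · obtain ⟨b, hb⟩ := hfin
    exact ⟨b, tendsto_nonlocalEnergy_div_of_lintegral_ne_top hu hb⟩
  · push Not at hfin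
    refine ⟨u 0, ?_⟩
    rw [hfin (u 0), mul_top two_ne_zero]
    exact tendsto_nonlocalEnergy_div_top hu hfin
end

section
/- Let u : ℝ^d → N be Borel measurable. There exists a constant C_d > 0, depending only on d, such that for every R > 0 and every h ∈ ℝ^d with |h| ≤ R, ∫_{ℝ^d} dist_N(u(x), u(x + h)) dx ≤ (C_d / |B^d_R|) ∬_{{(x,y) ∈ ℝ^d × ℝ^d : |x − y| ≤ R}} dist_N(u(x), u(y)) dx dy. -/
/-!
By the triangle inequality and translation invariance of Lebesgue measure, the map
`f z = ∫ dist (u x) (u (x + z)) dx` is subadditive, so `f h ≤ f z + f (h - z)` for every `z`.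
Averaging over `z` in the ball of radius `R / 2` around `h / 2`, which the reflection `z ↦ h - z`
maps to itself and which lies in the ball of radius `R`, gives
`f h * |B_{R/2}| ≤ 2 ∫_{|z| ≤ R} f z dz`, and by Fubini and translation invariance the last
integral is the double integral over `{|x - y| ≤ R}`. Since `|B_R| = 2^d |B_{R/2}|`, one can take
`C_d = 2^(d+1)`.
-/

open MeasureTheory Metric Set ENNReal Module

section Group

variable {G N : Type*} [AddCommGroup G] [MeasurableSpace G]
  [PseudoEMetricSpace N] [MeasurableSpace N] [OpensMeasurableSpace N] [SecondCountableTopology N]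

noncomputable def translationModulus (μ : Measure G) (u : G → N) (z : G) : ℝ≥0∞ :=
  ∫⁻ x, edist (u x) (u (x + z)) ∂μ

variable {μ : Measure G} {u : G → N}

theorem measurable_translationModulus [MeasurableAdd₂ G] [SFinite μ] (hu : Measurable u) :
    Measurable (translationModulus μ u) :=
  ((hu.comp measurable_snd).edist
    (hu.comp (measurable_snd.add measurable_fst))).lintegral_prod_right'

theorem translationModulus_add_le [MeasurableAdd G] [μ.IsAddLeftInvariant] (hu : Measurable u)
    (z w : G) :
    translationModulus μ u (z + w) ≤ translationModulus μ u z + translationModulus μ u w :=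
  calc ∫⁻ x, edist (u x) (u (x + (z + w))) ∂μ
      ≤ ∫⁻ x, edist (u x) (u (x + z)) + edist (u (x + z)) (u (x + z + w)) ∂μ :=
        lintegral_mono fun x => by rw [← add_assoc]; exact edist_triangle _ _ _
    _ = translationModulus μ u z + ∫⁻ x, edist (u (x + z)) (u (x + z + w)) ∂μ :=
        lintegral_add_left (hu.edist (hu.comp (measurable_add_const z))) _
    _ = translationModulus μ u z + translationModulus μ u w := by
        rw [lintegral_add_right_eq_self (fun x => edist (u x) (u (x + w))) z]; rfl

theorem setLIntegral_translationModulus [MeasurableAdd₂ G] [MeasurableSub₂ G] [SFinite μ]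
    [μ.IsAddLeftInvariant] (hu : Measurable u) {s : Set G} (hs : MeasurableSet s) :
    ∫⁻ z in s, translationModulus μ u z ∂μ
      = ∫⁻ p in {p : G × G | p.2 - p.1 ∈ s}, edist (u p.1) (u p.2) ∂μ.prod μ := by
  have hsub : MeasurableSet {p : G × G | p.2 - p.1 ∈ s} :=
    (measurable_snd.sub measurable_fst) hs
  have inner (x : G) : ∫⁻ y, s.indicator 1 (y - x) * edist (u x) (u y) ∂μ
      = ∫⁻ z, s.indicator 1 z * edist (u x) (u (x + z)) ∂μ := by
    rw [← lintegral_add_left_eq_self _ x]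
    simp only [add_sub_cancel_left]
  calc ∫⁻ z in s, translationModulus μ u z ∂μ
      = ∫⁻ z, ∫⁻ x, s.indicator 1 z * edist (u x) (u (x + z)) ∂μ ∂μ := by
        rw [← lintegral_indicator hs]
        congr 1; ext z
        by_cases hz : z ∈ s <;> simp [hz, translationModulus]
    _ = ∫⁻ x, ∫⁻ z, s.indicator 1 z * edist (u x) (u (x + z)) ∂μ ∂μ := by
        refine lintegral_lintegral_swap (Measurable.aemeasurable ?_)
        exact (measurable_one.indicator hs).comp measurable_fst |>.mul
          ((hu.comp measurable_snd).edist (hu.comp (measurable_snd.add measurable_fst)))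
    _ = ∫⁻ x, ∫⁻ y, s.indicator 1 (y - x) * edist (u x) (u y) ∂μ ∂μ := by
        simp_rw [inner]
    _ = ∫⁻ p in {p : G × G | p.2 - p.1 ∈ s}, edist (u p.1) (u p.2) ∂μ.prod μ := by
        rw [← lintegral_indicator hsub, lintegral_prod]
        · congr 1; ext x; congr 1; ext y
          by_cases hxy : y - x ∈ s <;> simp [hxy]
        · exact ((hu.comp measurable_fst).edist (hu.comp measurable_snd)).indicator hsub
            |>.aemeasurable

theorem translationModulus_mul_measure_le [MeasurableAdd₂ G] [MeasurableNeg G] [SFinite μ]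
    [μ.IsAddLeftInvariant] [μ.IsNegInvariant] (hu : Measurable u)
    {h : G} {s t : Set G} (ht : MeasurableSet t) (hst : ∀ z ∈ s, z ∈ t ∧ h - z ∈ t) :
    translationModulus μ u h * μ s ≤ 2 * ∫⁻ z in t, translationModulus μ u z ∂μ := by
  set f := translationModulus μ u
  have hm : Measurable f := measurable_translationModulus hu
  have reflect : ∫⁻ z in s, f (h - z) ∂μ ≤ ∫⁻ z in t, f z ∂μ :=
    calc ∫⁻ z in s, f (h - z) ∂μ
        ≤ ∫⁻ z in (h - ·) ⁻¹' t, f (h - z) ∂μ := lintegral_mono_set fun z hz => (hst z hz).2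
      _ = ∫⁻ z in t, f z ∂μ :=
          (Measure.measurePreserving_sub_left μ h).setLIntegral_comp_preimage ht hm
  calc f h * μ s
      = ∫⁻ z in s, f (z + (h - z)) ∂μ := by simp only [add_sub_cancel, setLIntegral_const]
    _ ≤ ∫⁻ z in s, f z + f (h - z) ∂μ :=
        lintegral_mono fun z => translationModulus_add_le hu z (h - z)
    _ = ∫⁻ z in s, f z ∂μ + ∫⁻ z in s, f (h - z) ∂μ := lintegral_add_left hm _
    _ ≤ ∫⁻ z in t, f z ∂μ + ∫⁻ z in t, f z ∂μ :=
        add_le_add (lintegral_mono_set fun z hz => (hst z hz).1) reflect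
    _ = 2 * ∫⁻ z in t, f z ∂μ := (two_mul _).symm

end Group

theorem mem_closedBall_of_mem_ball_half_smul {E : Type*} [NormedAddCommGroup E]
    [NormedSpace ℝ E] {h z : E} {R : ℝ} (hh : ‖h‖ ≤ R) (hz : z ∈ ball ((2 : ℝ)⁻¹ • h) (R / 2)) :
    z ∈ closedBall 0 R ∧ h - z ∈ closedBall 0 R := by
  set c : E := (2 : ℝ)⁻¹ • h
  have hc : ‖c‖ ≤ R / 2 := by
    rw [norm_smul]; norm_num; linarith
  have hhz : h - z = c - (z - c) := by simp only [c]; module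
  rw [mem_ball, dist_eq_norm] at hz
  rw [mem_closedBall_zero_iff, mem_closedBall_zero_iff]
  constructor
  · calc ‖z‖ = ‖(z - c) + c‖ := by rw [sub_add_cancel]
      _ ≤ R := by linarith [norm_add_le (z - c) c]
  · calc ‖h - z‖ = ‖c - (z - c)‖ := by rw [hhz]
      _ ≤ R := by linarith [norm_sub_le c (z - c)]

section Normed

variable {E N : Type*} [NormedAddCommGroup E] [NormedSpace ℝ E] [FiniteDimensional ℝ E]
  [MeasurableSpace E] [BorelSpace E] (μ : Measure E) [μ.IsAddHaarMeasure]
  [PseudoEMetricSpace N] [MeasurableSpace N] [OpensMeasurableSpace N] [SecondCountableTopology N]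

theorem measure_ball_eq_two_pow_mul_measure_ball_half (c : E) {R : ℝ} :
    μ (ball 0 R) = 2 ^ finrank ℝ E * μ (ball c (R / 2)) := by
  nth_rw 1 [Measure.addHaar_ball_center μ c, show R = 2 * (R / 2) by ring]
  rw [Measure.addHaar_ball_mul_of_pos μ 0 two_pos, ENNReal.ofReal_pow zero_le_two,
    ENNReal.ofReal_ofNat]

theorem translationModulus_le {u : E → N} (hu : Measurable u) {R : ℝ} (hR : 0 < R) {h : E}
    (hh : ‖h‖ ≤ R) :
    translationModulus μ u h ≤ ENNReal.ofReal (2 ^ (finrank ℝ E + 1))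
      * ((∫⁻ p in {p : E × E | dist p.1 p.2 ≤ R}, edist (u p.1) (u p.2) ∂μ.prod μ)
        / μ (ball 0 R)) := by
  set D := ∫⁻ p in {p : E × E | dist p.1 p.2 ≤ R}, edist (u p.1) (u p.2) ∂μ.prod μ
  set B := ball ((2 : ℝ)⁻¹ • h) (R / 2)
  have hD : ∫⁻ z in closedBall 0 R, translationModulus μ u z ∂μ = D := by
    rw [setLIntegral_translationModulus hu measurableSet_closedBall]
    congr; ext p
    simp only [mem_closedBall_zero_iff, ← dist_eq_norm, dist_comm]
  have hB₀ : μ B ≠ 0 := (measure_ball_pos μ _ (half_pos hR)).ne'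
  have hB : translationModulus μ u h * μ B ≤ 2 * D := hD ▸
    translationModulus_mul_measure_le hu measurableSet_closedBall
      fun z hz => mem_closedBall_of_mem_ball_half_smul hh hz
  calc translationModulus μ u h ≤ 2 * D / μ B :=
        (ENNReal.le_div_iff_mul_le (.inl hB₀) (.inl measure_ball_lt_top.ne)).2 hB
    _ = ENNReal.ofReal (2 ^ (finrank ℝ E + 1)) * (D / μ (ball 0 R)) := by
        rw [measure_ball_eq_two_pow_mul_measure_ball_half μ ((2 : ℝ)⁻¹ • h),
          ENNReal.ofReal_pow zero_le_two, ENNReal.ofReal_ofNat, pow_succ, mul_assoc,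
          ← mul_div_assoc, ← mul_div_assoc,
          ENNReal.mul_div_mul_left _ _ (by positivity) (ENNReal.pow_ne_top ENNReal.ofNat_ne_top)]

end Normed

theorem stmt_8_general (d : ℕ)
    {N : Type*} [MetricSpace N] [TopologicalSpace.SeparableSpace N]
    [MeasurableSpace N] [BorelSpace N] :
    ∃ C : ℝ, 0 < C ∧ ∀ u : EuclideanSpace ℝ (Fin d) → N, Measurable u →
      ∀ (R : ℝ), 0 < R → ∀ h : EuclideanSpace ℝ (Fin d), ‖h‖ ≤ R →
        ∫⁻ x, edist (u x) (u (x + h))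
          ≤ ENNReal.ofReal C
              * ((∫⁻ p in {p : EuclideanSpace ℝ (Fin d) × EuclideanSpace ℝ (Fin d) |
                    dist p.1 p.2 ≤ R}, edist (u p.1) (u p.2))
                  / volume (Metric.ball (0 : EuclideanSpace ℝ (Fin d)) R)) := by
  refine ⟨2 ^ (d + 1), by positivity, fun u hu R hR h hh => ?_⟩
  simpa [translationModulus, Measure.volume_eq_prod, finrank_euclideanSpace_fin] using
    translationModulus_le volume hu hR hh

/-- There is a constant `C_d > 0`, depending only on `d`, such that for every Borel
measurable `u : ℝ^d → N`, every `R > 0` and every `h` with `|h| ≤ R`,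
`∫ dist (u x) (u (x+h)) dx ≤ (C_d / |B^d_R|) ∬_{|x-y| ≤ R} dist (u x) (u y) dx dy`. -/
theorem stmt_8 (d : ℕ) (hd : 1 ≤ d)
    {N : Type*} [MetricSpace N] [CompleteSpace N] [TopologicalSpace.SeparableSpace N]
    [MeasurableSpace N] [BorelSpace N] :
    ∃ C : ℝ, 0 < C ∧ ∀ u : EuclideanSpace ℝ (Fin d) → N, Measurable u →
      ∀ (R : ℝ), 0 < R → ∀ h : EuclideanSpace ℝ (Fin d), ‖h‖ ≤ R →
        ∫⁻ x, edist (u x) (u (x + h))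
          ≤ ENNReal.ofReal C
              * ((∫⁻ p in {p : EuclideanSpace ℝ (Fin d) × EuclideanSpace ℝ (Fin d) |
                    dist p.1 p.2 ≤ R}, edist (u p.1) (u p.2))
                  / volume (Metric.ball (0 : EuclideanSpace ℝ (Fin d)) R)) :=
  stmt_8_general d
end

section
/- Let u : ℝ^d → N be Borel measurable. If for some R > 0 the quantity (1/|B^d_R|) ∬_{{(x,y) ∈ ℝ^d × ℝ^d : |x − y| ≤ R}} dist_N(u(x), u(y)) dx dy is finite, then lim_{r → 0⁺} (1/|B^d_r|) ∬_{{(x,y) ∈ ℝ^d × ℝ^d : |x − y| ≤ r}} dist_N(u(x), u(y)) dx dy = 0. -/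
/-!
Write `ψ h = ∫ d(u x, u (x + h)) dx`. By Tonelli and translation invariance the double integral
over `{|x - y| ≤ r}` equals `∫_{|h| ≤ r} ψ h dh`, so it suffices to show `ψ h → 0` as `h → 0`.

Let `ψ_S` be the same integral with `x` restricted to `S`. If `S'`, `S' + k ⊆ S`, the triangle inequality
through `u (x + k)` gives `ψ_{S'} h ≤ ψ_S k + ψ_S (h - k)`; averaging over `k ∈ B(0, R/2)` bounds
`ψ_{S'} h` for `|h| < R/2` by `∫_{|v| ≤ R} ψ_S`, and for `S = {|x| > m}` this is a tail of the
finite integral `∫ x, ∫_{|v| ≤ R} d(u x, u (x + v))`. Hence `ψ` restricted to the complement of a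
large ball is uniformly small. The same finiteness makes `x ↦ d(u x, c)` integrable on compact
sets, so on a ball `u` is `L¹`-close to a simple function, for which continuity of translations
reduces to `|(S - h) ∆ S| → 0`.
-/

open MeasureTheory Filter Metric Set
open scoped ENNReal Topology symmDiff

theorem tendsto_setLIntegral_compl_closedBall {X : Type*} [PseudoMetricSpace X]
    [MeasurableSpace X] [OpensMeasurableSpace X] (μ : Measure X) [SFinite μ] (x₀ : X)
    {f : X → ℝ≥0∞} (hf : ∫⁻ x, f x ∂μ ≠ ∞) :
    Tendsto (fun m : ℝ => ∫⁻ x in (closedBall x₀ m)ᶜ, f x ∂μ) atTop (𝓝 0) := by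
  have hanti : Antitone fun m : ℝ => (closedBall x₀ m)ᶜ := fun m m' hm =>
    compl_subset_compl.2 (closedBall_subset_closedBall hm)
  have hempty : ⋂ m : ℝ, (closedBall x₀ m)ᶜ = ∅ :=
    eq_empty_iff_forall_notMem.2 fun x hx => mem_iInter.1 hx (dist x x₀) (mem_closedBall.2 le_rfl)
  have hfin : μ.withDensity f (closedBall x₀ 0)ᶜ ≠ ∞ :=
    ne_top_of_le_ne_top (by rwa [withDensity_apply', Measure.restrict_univ])
      (measure_mono (subset_univ _))
  simpa [Function.comp_def, withDensity_apply', hempty] using tendsto_measure_iInter_atTop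
    (fun m => measurableSet_closedBall.compl.nullMeasurableSet) hanti ⟨0, hfin⟩

theorem exists_simpleFunc_lintegral_edist_lt {α : Type*} [MeasurableSpace α] (μ : Measure α)
    {N : Type*} [MetricSpace N] [MeasurableSpace N] [BorelSpace N] [SecondCountableTopology N]
    {u : α → N} (hu : Measurable u) {c : N} (hc : ∫⁻ x, edist (u x) c ∂μ ≠ ∞) {ε : ℝ≥0∞}
    (hε : 0 < ε) : ∃ s : SimpleFunc α N, ∫⁻ x, edist (s x) (u x) ∂μ < ε := by
  let s : ℕ → SimpleFunc α N := SimpleFunc.approxOn u hu univ c (mem_univ c)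
  -- With base point `c`, the approximants satisfy `edist (s n x) (u x) ≤ edist c (u x)`.
  have hs : Tendsto (fun n => ∫⁻ x, edist (s n x) (u x) ∂μ) atTop (𝓝 0) := by
    simpa using tendsto_lintegral_of_dominated_convergence (f := fun _ => 0)
      (fun x => edist (u x) c) (fun n => (s n).measurable.edist hu)
      (fun n => ae_of_all _ fun x => by
        simpa only [edist_comm c] using SimpleFunc.edist_approxOn_le hu (mem_univ c) x n) hc
      (ae_of_all _ fun x => by
        simpa using (SimpleFunc.tendsto_approxOn hu (mem_univ c) (x := x) (by simp)).edist
          (tendsto_const_nhds (x := u x)))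
  obtain ⟨n, hn⟩ := (hs.eventually_lt_const hε).exists
  exact ⟨s n, hn⟩

section Translation

variable {E : Type*} [NormedAddCommGroup E] [MeasurableSpace E] [BorelSpace E] {μ : Measure E}
  {N : Type*} [MetricSpace N]

noncomputable def translationEdist (μ : Measure E) (u : E → N) (S : Set E) (h : E) : ℝ≥0∞ :=
  ∫⁻ x in S, edist (u x) (u (x + h)) ∂μ

theorem setLIntegral_closedBall_comp_add_left [μ.IsAddLeftInvariant] (g : E → ℝ≥0∞) (x : E)
    (r : ℝ) : ∫⁻ v in closedBall 0 r, g (x + v) ∂μ = ∫⁻ y in closedBall x r, g y ∂μ := by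
  rw [← (measurePreserving_add_left μ x).setLIntegral_comp_preimage_emb
    (measurableEmbedding_addLeft x) g (closedBall x r), preimage_add_closedBall, sub_self]

theorem translationEdist_le_add_sub [MeasurableSpace N] [BorelSpace N]
    [SecondCountableTopology N] [μ.IsAddRightInvariant] {u : E → N} (hu : Measurable u)
    {S S' : Set E} {k : E} (hsub : S' ⊆ S) (hk : ∀ x ∈ S', x + k ∈ S) (h : E) :
    translationEdist μ u S' h ≤ translationEdist μ u S k + translationEdist μ u S (h - k) := by
  calc translationEdist μ u S' h
      ≤ ∫⁻ x in S', edist (u x) (u (x + k)) + edist (u (x + k)) (u (x + k + (h - k))) ∂μ :=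
        lintegral_mono fun x => by rw [add_add_sub_cancel]; exact edist_triangle _ _ _
    _ = ∫⁻ x in S', edist (u x) (u (x + k)) ∂μ
          + ∫⁻ x in S', edist (u (x + k)) (u (x + k + (h - k))) ∂μ :=
        lintegral_add_left (by fun_prop) _
    _ ≤ translationEdist μ u S k
          + ∫⁻ x in (· + k) ⁻¹' S, edist (u (x + k)) (u (x + k + (h - k))) ∂μ :=
        add_le_add (lintegral_mono_set hsub) (lintegral_mono_set hk)
    _ = translationEdist μ u S k + translationEdist μ u S (h - k) := by
        rw [(measurePreserving_add_right μ k).setLIntegral_comp_preimage_emb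
          (measurableEmbedding_addRight k) (fun y => edist (u y) (u (y + (h - k)))) S]
        rfl

section Haar

variable [NormedSpace ℝ E] [FiniteDimensional ℝ E] [μ.IsAddHaarMeasure]

theorem tendsto_measure_preimage_add_right_symmDiff {s : Set E} (hs : MeasurableSet s)
    (hμs : μ s ≠ ∞) : Tendsto (fun h : E => μ (((· + h) ⁻¹' s) ∆ s)) (𝓝 0) (𝓝 0) := by
  let translate : E → C(E, E) := fun h => ⟨(· + h), continuous_add_const h⟩
  have hcont : Continuous translate :=
    ContinuousMap.continuous_of_continuous_uncurry _ (continuous_snd.add continuous_fst)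
  have h0 : translate 0 = ContinuousMap.id E := by ext; simp [translate]
  have hlim : Tendsto translate (𝓝 0) (𝓝 (ContinuousMap.id E)) := h0 ▸ hcont.tendsto 0
  have hid : MeasurePreserving (ContinuousMap.id E) μ μ := MeasurePreserving.id μ
  simpa [translate] using tendsto_measure_symmDiff_preimage_nhds_zero hlim
    (.of_forall fun h => measurePreserving_add_right μ h) hid hs.nullMeasurableSet hμs

theorem tendsto_translationEdist_simpleFunc (s : SimpleFunc E N) {S : Set E}
    (hS : MeasurableSet S) (hμS : μ S ≠ ∞) :
    Tendsto (translationEdist μ s S) (𝓝 0) (𝓝 0) := by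
  classical
  let C : ℝ≥0∞ := s.range.sup fun a => s.range.sup fun b => edist a b
  have hC : C ≠ ∞ := ((Finset.sup_lt_iff bot_lt_top).2 fun a _ =>
    (Finset.sup_lt_iff bot_lt_top).2 fun b _ => edist_lt_top a b).ne
  have hCle : ∀ x y, edist (s x) (s y) ≤ C := fun x y =>
    Finset.le_sup_of_le (s.mem_range_self x)
      (Finset.le_sup (f := fun b => edist (s x) b) (s.mem_range_self y))
  let A : N → Set E := fun a => s ⁻¹' {a} ∩ S
  have hA : ∀ a, MeasurableSet (A a) := fun a => (s.measurableSet_fiber a).inter hS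
  have hbound : ∀ h, translationEdist μ s S h
      ≤ C * ∑ a ∈ s.range, μ (((· + h) ⁻¹' A a) ∆ A a) := by
    intro h
    let U := ⋃ a ∈ s.range, A a \ (· + h) ⁻¹' A a
    have hU : MeasurableSet U := Finset.measurableSet_biUnion _ fun a _ =>
      (hA a).diff ((hA a).preimage (measurable_add_const h))
    calc translationEdist μ s S h ≤ ∫⁻ x in S, U.indicator (fun _ => C) x ∂μ := by
          refine setLIntegral_mono (measurable_const.indicator hU) fun x hx => ?_
          by_cases hx' : s x = s (x + h)
          · simp [hx']
          · rw [indicator_of_mem (show x ∈ U from mem_biUnion (s.mem_range_self x)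
              ⟨⟨rfl, hx⟩, fun h' => hx' h'.1.symm⟩)]
            exact hCle x (x + h)
      _ ≤ ∫⁻ x, U.indicator (fun _ => C) x ∂μ := setLIntegral_le_lintegral _ _
      _ = C * μ U := lintegral_indicator_const hU C
      _ ≤ C * ∑ a ∈ s.range, μ (((· + h) ⁻¹' A a) ∆ A a) := by
          gcongr
          exact (measure_biUnion_finset_le _ _).trans
            (Finset.sum_le_sum fun a _ => measure_mono subset_union_right)
  have hlim : Tendsto (fun h => C * ∑ a ∈ s.range, μ (((· + h) ⁻¹' A a) ∆ A a)) (𝓝 0)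
      (𝓝 0) := by
    simpa using ENNReal.Tendsto.const_mul (tendsto_finsetSum _ fun a _ =>
      tendsto_measure_preimage_add_right_symmDiff (hA a)
        ((measure_mono inter_subset_right).trans_lt hμS.lt_top).ne) (Or.inr hC)
  exact tendsto_of_tendsto_of_tendsto_of_le_of_le tendsto_const_nhds hlim (fun _ => bot_le)
    hbound

theorem tendsto_setLIntegral_closedBall_div_measure_ball [Nontrivial E] {f : E → ℝ≥0∞}
    (hf : Tendsto f (𝓝 0) (𝓝 0)) :
    Tendsto (fun r : ℝ => (∫⁻ h in closedBall 0 r, f h ∂μ) / μ (ball 0 r)) (𝓝[>] 0) (𝓝 0) := by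
  rw [ENNReal.tendsto_nhds_zero]
  intro ε hε
  obtain ⟨δ, hδ, hfδ⟩ := Metric.eventually_nhds_iff_ball.1 (ENNReal.tendsto_nhds_zero.1 hf ε hε)
  filter_upwards [Ioo_mem_nhdsGT hδ] with r hr
  refine ENNReal.div_le_of_le_mul ?_
  calc ∫⁻ h in closedBall 0 r, f h ∂μ ≤ ∫⁻ _ in closedBall 0 r, ε ∂μ :=
        setLIntegral_mono' measurableSet_closedBall fun h hh =>
          hfδ h (closedBall_subset_ball hr.2 hh)
    _ = ε * μ (ball 0 r) := by
        rw [setLIntegral_const, Measure.addHaar_closedBall_eq_addHaar_ball]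

theorem IsCompact.setLIntegral_edist_ne_top {u : E → N} {R : ℝ} (hR : 0 < R)
    (hae : ∀ᵐ x ∂μ, ∫⁻ v in closedBall 0 R, edist (u x) (u (x + v)) ∂μ ≠ ∞) (c : N)
    {K : Set E} (hK : IsCompact K) : ∫⁻ x in K, edist (u x) c ∂μ ≠ ∞ := by
  refine hK.induction_on (p := fun s => ∫⁻ x in s, edist (u x) c ∂μ ≠ ∞) (by simp)
    (fun s t hst ht => ne_top_of_le_ne_top ht (lintegral_mono_set hst))
    (fun s t hs ht => ne_top_of_le_ne_top (ENNReal.add_ne_top.2 ⟨hs, ht⟩)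
      (lintegral_union_le _ s t))
    fun z _ => ⟨ball z (R / 2), mem_nhdsWithin_of_mem_nhds (ball_mem_nhds z (half_pos hR)), ?_⟩
  obtain ⟨x₀, hx₀, hfin⟩ := Measure.exists_mem_of_measure_ne_zero_of_ae
    (measure_ball_pos μ z (half_pos hR)).ne' (ae_restrict_of_ae hae)
  have hsub : ball z (R / 2) ⊆ closedBall x₀ R := fun y hy => by
    rw [mem_ball] at hx₀ hy
    rw [mem_closedBall]
    linarith [dist_triangle_right y x₀ z]
  have hle : ∫⁻ y in ball z (R / 2), edist (u y) c ∂μ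
      ≤ ∫⁻ v in closedBall 0 R, edist (u x₀) (u (x₀ + v)) ∂μ
        + edist (u x₀) c * μ (ball z (R / 2)) := calc
    _ ≤ ∫⁻ y in ball z (R / 2), edist (u x₀) (u y) + edist (u x₀) c ∂μ :=
        lintegral_mono fun y => by rw [edist_comm (u x₀)]; exact edist_triangle _ _ _
    _ = ∫⁻ y in ball z (R / 2), edist (u x₀) (u y) ∂μ
          + edist (u x₀) c * μ (ball z (R / 2)) := by
        rw [lintegral_add_right _ measurable_const, setLIntegral_const]
    _ ≤ _ := by
        rw [setLIntegral_closedBall_comp_add_left (fun y => edist (u x₀) (u y))]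
        exact add_le_add_left (lintegral_mono_set hsub) _
  exact ne_top_of_le_ne_top (ENNReal.add_ne_top.2
    ⟨hfin, ENNReal.mul_ne_top (edist_ne_top (u x₀) c) measure_ball_lt_top.ne⟩) hle

variable [MeasurableSpace N] [BorelSpace N] [SecondCountableTopology N]

theorem measurable_translationEdist {u : E → N} (hu : Measurable u) (S : Set E) :
    Measurable (translationEdist μ u S) :=
  Measurable.lintegral_prod_left (by fun_prop)

theorem setLIntegral_translationEdist {u : E → N} (hu : Measurable u) (S T : Set E) :
    ∫⁻ h in T, translationEdist μ u S h ∂μ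
      = ∫⁻ x in S, ∫⁻ h in T, edist (u x) (u (x + h)) ∂μ ∂μ :=
  lintegral_lintegral_swap (by fun_prop)

theorem lintegral_dist_le_eq_setLIntegral_translationEdist {u : E → N} (hu : Measurable u)
    (t : ℝ) :
    ∫⁻ p in {p : E × E | dist p.1 p.2 ≤ t}, edist (u p.1) (u p.2) ∂(μ.prod μ)
      = ∫⁻ h in closedBall 0 t, translationEdist μ u univ h ∂μ := by
  have hmeas : MeasurableSet {p : E × E | dist p.1 p.2 ≤ t} :=
    measurableSet_le (by fun_prop) measurable_const
  rw [← lintegral_indicator hmeas,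
    lintegral_prod _ (Measurable.indicator (by fun_prop) hmeas).aemeasurable,
    setLIntegral_translationEdist hu, Measure.restrict_univ]
  refine lintegral_congr fun x => ?_
  rw [setLIntegral_closedBall_comp_add_left (fun y => edist (u x) (u y)),
    ← lintegral_indicator measurableSet_closedBall]
  congr 1 with y
  by_cases hxy : dist x y ≤ t
  · rw [indicator_of_mem (by exact hxy), indicator_of_mem (by rwa [mem_closedBall, dist_comm])]
  · rw [indicator_of_notMem (by exact hxy),
      indicator_of_notMem (by rwa [mem_closedBall, dist_comm])]

theorem tendsto_translationEdist_closedBall {u : E → N} (hu : Measurable u) (c : N) (M : ℝ)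
    (hloc : ∫⁻ x in closedBall 0 (M + 1), edist (u x) c ∂μ ≠ ∞) :
    Tendsto (translationEdist μ u (closedBall 0 M)) (𝓝 0) (𝓝 0) := by
  set B := closedBall (0 : E) (M + 1)
  rw [ENNReal.tendsto_nhds_zero]
  intro ε hε
  have hε3 : 0 < ε / 3 := ENNReal.div_pos hε.ne' ENNReal.ofNat_ne_top
  obtain ⟨s, hs⟩ := exists_simpleFunc_lintegral_edist_lt (μ.restrict B) hu hloc hε3
  filter_upwards [ENNReal.tendsto_nhds_zero.1 (tendsto_translationEdist_simpleFunc (μ := μ)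
      s measurableSet_closedBall measure_closedBall_lt_top.ne) _ hε3,
    closedBall_mem_nhds (0 : E) one_pos] with h hsh hh
  have hshift : closedBall (0 : E) M ⊆ (· + h) ⁻¹' B := fun x hx => by
    simp only [B, mem_preimage, mem_closedBall_zero_iff] at hx hh ⊢
    exact (norm_add_le _ _).trans (add_le_add hx hh)
  calc translationEdist μ u (closedBall 0 M) h
      ≤ ∫⁻ x in closedBall 0 M, edist (u x) (s x) + edist (s x) (s (x + h))
          + edist (s (x + h)) (u (x + h)) ∂μ :=
        lintegral_mono fun x => edist_triangle4 _ _ _ _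
    _ = ∫⁻ x in closedBall 0 M, edist (u x) (s x) ∂μ
          + translationEdist μ s (closedBall 0 M) h
          + ∫⁻ x in closedBall 0 M, edist (s (x + h)) (u (x + h)) ∂μ := by
        have hsm := s.measurable
        rw [lintegral_add_left (by fun_prop), lintegral_add_left (by fun_prop)]
        rfl
    _ ≤ ε / 3 + ε / 3 + ε / 3 := by
        gcongr
        · calc _ ≤ ∫⁻ x in B, edist (s x) (u x) ∂μ := by
                simp_rw [edist_comm (u _)]
                exact lintegral_mono_set (closedBall_subset_closedBall (by linarith))
            _ ≤ ε / 3 := hs.le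
        · calc _ ≤ ∫⁻ x in (· + h) ⁻¹' B, edist (s (x + h)) (u (x + h)) ∂μ :=
                lintegral_mono_set hshift
            _ = ∫⁻ y in B, edist (s y) (u y) ∂μ :=
                (measurePreserving_add_right μ h).setLIntegral_comp_preimage_emb
                  (measurableEmbedding_addRight h) (fun y => edist (s y) (u y)) B
            _ ≤ ε / 3 := hs.le
    _ = ε := ENNReal.add_thirds ε

theorem measure_ball_mul_translationEdist_le {u : E → N} (hu : Measurable u) {S S' : Set E}
    {ρ : ℝ} (hρ : 0 < ρ) (hS : ∀ x ∈ S', ∀ k ∈ ball (0 : E) ρ, x + k ∈ S) {h : E}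
    (hh : h ∈ ball (0 : E) ρ) :
    μ (ball 0 ρ) * translationEdist μ u S' h
      ≤ 2 * ∫⁻ v in ball 0 (2 * ρ), translationEdist μ u S v ∂μ := by
  have hsub : S' ⊆ S := fun x hx => by simpa using hS x hx 0 (mem_ball_self hρ)
  calc μ (ball 0 ρ) * translationEdist μ u S' h
      = ∫⁻ _ in ball 0 ρ, translationEdist μ u S' h ∂μ := by rw [setLIntegral_const, mul_comm]
    _ ≤ ∫⁻ k in ball 0 ρ, translationEdist μ u S k + translationEdist μ u S (h - k) ∂μ :=
        setLIntegral_mono' measurableSet_ball fun k hk =>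
          translationEdist_le_add_sub hu hsub (fun x hx => hS x hx k hk) h
    _ = ∫⁻ k in ball 0 ρ, translationEdist μ u S k ∂μ
          + ∫⁻ k in ball 0 ρ, translationEdist μ u S (h - k) ∂μ :=
        lintegral_add_left (measurable_translationEdist hu S) _
    _ ≤ ∫⁻ v in ball 0 (2 * ρ), translationEdist μ u S v ∂μ
          + ∫⁻ k in (h - ·) ⁻¹' ball 0 (2 * ρ), translationEdist μ u S (h - k) ∂μ := by
        refine add_le_add (lintegral_mono_set (ball_subset_ball (by linarith)))
          (lintegral_mono_set fun k hk => ?_)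
        simp only [mem_preimage, mem_ball_zero_iff] at hk hh ⊢
        linarith [norm_sub_le h k]
    _ = 2 * ∫⁻ v in ball 0 (2 * ρ), translationEdist μ u S v ∂μ := by
        rw [(Measure.measurePreserving_sub_left μ h).setLIntegral_comp_preimage_emb
          (measurableEmbedding_subLeft h) (translationEdist μ u S) (ball 0 (2 * ρ))]
        exact (two_mul _).symm

theorem exists_translationEdist_compl_closedBall_le {u : E → N} (hu : Measurable u) {R : ℝ}
    (hR : 0 < R) (hfin : ∫⁻ x, ∫⁻ v in closedBall 0 R, edist (u x) (u (x + v)) ∂μ ∂μ ≠ ∞)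
    {ε : ℝ≥0∞} (hε : 0 < ε) :
    ∃ M, ∀ h ∈ ball (0 : E) (R / 2), translationEdist μ u (closedBall 0 M)ᶜ h ≤ ε := by
  have hball : μ (ball (0 : E) (R / 2)) ≠ 0 := (measure_ball_pos μ 0 (half_pos hR)).ne'
  have htail : Tendsto (fun m : ℝ => 2 * (∫⁻ x in (closedBall 0 m)ᶜ,
      ∫⁻ v in closedBall 0 R, edist (u x) (u (x + v)) ∂μ ∂μ) / μ (ball (0 : E) (R / 2)))
      atTop (𝓝 0) := by
    simpa using ENNReal.Tendsto.div_const (ENNReal.Tendsto.const_mul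
      (tendsto_setLIntegral_compl_closedBall μ 0 hfin) (Or.inr ENNReal.ofNat_ne_top))
      (Or.inr hball)
  obtain ⟨m, hm⟩ := (htail.eventually_lt_const hε).exists
  refine ⟨m + R / 2, fun h hh => le_trans ?_ hm.le⟩
  have hshift : ∀ x ∈ (closedBall (0 : E) (m + R / 2))ᶜ, ∀ k ∈ ball (0 : E) (R / 2),
      x + k ∈ (closedBall (0 : E) m)ᶜ := fun x hx k hk => by
    simp only [mem_compl_iff, mem_closedBall_zero_iff, mem_ball_zero_iff, not_le] at hx hk ⊢
    have := norm_sub_le (x + k) k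
    rw [add_sub_cancel_right] at this
    linarith
  rw [ENNReal.le_div_iff_mul_le (Or.inl hball) (Or.inl measure_ball_lt_top.ne), mul_comm]
  calc μ (ball 0 (R / 2)) * translationEdist μ u (closedBall 0 (m + R / 2))ᶜ h
      ≤ 2 * ∫⁻ v in ball 0 (2 * (R / 2)), translationEdist μ u (closedBall 0 m)ᶜ v ∂μ :=
        measure_ball_mul_translationEdist_le hu (half_pos hR) hshift hh
    _ ≤ 2 * ∫⁻ v in closedBall 0 R, translationEdist μ u (closedBall 0 m)ᶜ v ∂μ := by
        rw [mul_div_cancel₀ R two_ne_zero]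
        exact mul_le_mul_right (lintegral_mono_set ball_subset_closedBall) 2
    _ = 2 * ∫⁻ x in (closedBall 0 m)ᶜ, ∫⁻ v in closedBall 0 R, edist (u x) (u (x + v)) ∂μ ∂μ := by
        rw [setLIntegral_translationEdist hu]

theorem tendsto_translationEdist_univ {u : E → N} (hu : Measurable u) {R : ℝ} (hR : 0 < R)
    (hfin : ∫⁻ h in closedBall 0 R, translationEdist μ u univ h ∂μ ≠ ∞) :
    Tendsto (translationEdist μ u univ) (𝓝 0) (𝓝 0) := by
  rw [setLIntegral_translationEdist hu, Measure.restrict_univ] at hfin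
  have hae := ae_lt_top (Measurable.lintegral_prod_right (by fun_prop)) hfin
  rw [ENNReal.tendsto_nhds_zero]
  intro ε hε
  obtain ⟨M, hM⟩ := exists_translationEdist_compl_closedBall_le hu hR hfin (ENNReal.half_pos hε.ne')
  have hloc := (isCompact_closedBall (0 : E) (M + 1)).setLIntegral_edist_ne_top hR
    (hae.mono fun _ hx => hx.ne) (u 0)
  filter_upwards [ENNReal.tendsto_nhds_zero.1 (tendsto_translationEdist_closedBall hu (u 0) M hloc)
    _ (ENNReal.half_pos hε.ne'), ball_mem_nhds 0 (half_pos hR)] with h hball hh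
  calc translationEdist μ u univ h
      = translationEdist μ u (closedBall 0 M) h + translationEdist μ u (closedBall 0 M)ᶜ h := by
        simp only [translationEdist, Measure.restrict_univ]
        exact (lintegral_add_compl _ measurableSet_closedBall).symm
    _ ≤ ε / 2 + ε / 2 := add_le_add hball (hM h hh)
    _ = ε := ENNReal.add_halves ε

end Haar

end Translation

theorem stmt_9_general (d : ℕ) (hd : 1 ≤ d)
    {N : Type*} [MetricSpace N] [TopologicalSpace.SeparableSpace N]
    [MeasurableSpace N] [BorelSpace N]
    (u : EuclideanSpace ℝ (Fin d) → N) (hu : Measurable u)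
    (R : ℝ) (hR : 0 < R)
    (hfin : (∫⁻ p in {p : EuclideanSpace ℝ (Fin d) × EuclideanSpace ℝ (Fin d) |
          dist p.1 p.2 ≤ R}, edist (u p.1) (u p.2))
        / volume (Metric.ball (0 : EuclideanSpace ℝ (Fin d)) R) < ⊤) :
    Tendsto
      (fun r : ℝ =>
        (∫⁻ p in {p : EuclideanSpace ℝ (Fin d) × EuclideanSpace ℝ (Fin d) |
            dist p.1 p.2 ≤ r}, edist (u p.1) (u p.2))
          / volume (Metric.ball (0 : EuclideanSpace ℝ (Fin d)) r))
      (nhdsWithin 0 (Set.Ioi 0)) (nhds 0) := by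
  have : SecondCountableTopology N := UniformSpace.secondCountable_of_separable N
  have : Nonempty (Fin d) := ⟨⟨0, hd⟩⟩
  rw [Measure.volume_eq_prod] at hfin ⊢
  simp only [lintegral_dist_le_eq_setLIntegral_translationEdist hu] at hfin ⊢
  refine tendsto_setLIntegral_closedBall_div_measure_ball (tendsto_translationEdist_univ hu hR ?_)
  intro htop
  simp [htop, ENNReal.top_div_of_ne_top measure_ball_lt_top.ne] at hfin

/-- If for some `R > 0` the quantity `(1/|B^d_R|) ∬_{|x-y| ≤ R} dist (u x) (u y)` is
finite, then `(1/|B^d_r|) ∬_{|x-y| ≤ r} dist (u x) (u y) → 0` as `r → 0⁺`. -/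
theorem stmt_9 (d : ℕ) (hd : 1 ≤ d)
    {N : Type*} [MetricSpace N] [CompleteSpace N] [TopologicalSpace.SeparableSpace N]
    [MeasurableSpace N] [BorelSpace N]
    (u : EuclideanSpace ℝ (Fin d) → N) (hu : Measurable u)
    (R : ℝ) (hR : 0 < R)
    (hfin : (∫⁻ p in {p : EuclideanSpace ℝ (Fin d) × EuclideanSpace ℝ (Fin d) |
          dist p.1 p.2 ≤ R}, edist (u p.1) (u p.2))
        / volume (Metric.ball (0 : EuclideanSpace ℝ (Fin d)) R) < ⊤) :
    Tendsto
      (fun r : ℝ =>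
        (∫⁻ p in {p : EuclideanSpace ℝ (Fin d) × EuclideanSpace ℝ (Fin d) |
            dist p.1 p.2 ≤ r}, edist (u p.1) (u p.2))
          / volume (Metric.ball (0 : EuclideanSpace ℝ (Fin d)) r))
      (nhdsWithin 0 (Set.Ioi 0)) (nhds 0) :=
  stmt_9_general d hd u hu R hR hfin
end
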